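/- arXiv:2105.04290 — 6 statements merged into one kernel-verified Lean document; each statement's English description precedes it below -/
import Mathlib

section
/- Let k ≥ 2 and n ≥ 1, and consider n samples with correctness indicators c_i ∈ {0,1} and confidences z_i ∈ [1/k, 1]. Let π̂₀ = (Σ_i c_i)/n be the empirical accuracy and assume π̂₀ < 1, that every misclassified sample (c_i = 0) has confidence z_i > 1/k, and that no misclassified sample has the same confidence value as any correctly classified sample. Then the supremum over all binning schemes B of the empirical binned ECE is strictly greater than (1 − π̂₀)/k. -/
open scoped Classical

/-- The empirical binned expected calibration error of `n` samples with correctness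
indicators `c` and confidences `z`, for the binning scheme (partition of `[0,1]`)
whose bins are the fibers of the bin-assignment function `B`.  The sum ranges exactly
over the bins containing at least one sample. -/
noncomputable def binnedECE {n : ℕ} (c z : Fin n → ℝ) (B : ℝ → ℕ) : ℝ :=
  ∑ j ∈ Finset.image (fun i => B (z i)) Finset.univ,
    ((Finset.univ.filter fun i => B (z i) = j).card : ℝ) / n *
      |(∑ i ∈ Finset.univ.filter fun i => B (z i) = j, c i) /
          ((Finset.univ.filter fun i => B (z i) = j).card : ℝ) -
        (∑ i ∈ Finset.univ.filter fun i => B (z i) = j, z i) /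
          ((Finset.univ.filter fun i => B (z i) = j).card : ℝ)|

lemma binnedECE_le_one {n : ℕ} (c z : Fin n → ℝ) (B : ℝ → ℕ)
    (hc : ∀ i, 0 ≤ c i ∧ c i ≤ 1) (hz : ∀ i, 0 ≤ z i ∧ z i ≤ 1) (hn : 1 ≤ n) :
    binnedECE c z B ≤ 1 := by
  classical
  have hn0 : (0:ℝ) < (n:ℝ) := by exact_mod_cast hn
  unfold binnedECE
  have h1 : ∀ j ∈ Finset.image (fun i => B (z i)) Finset.univ,
      ((Finset.univ.filter fun i => B (z i) = j).card : ℝ) / n *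
      |(∑ i ∈ Finset.univ.filter fun i => B (z i) = j, c i) /
          ((Finset.univ.filter fun i => B (z i) = j).card : ℝ) -
        (∑ i ∈ Finset.univ.filter fun i => B (z i) = j, z i) /
          ((Finset.univ.filter fun i => B (z i) = j).card : ℝ)|
      ≤ ((Finset.univ.filter fun i => B (z i) = j).card : ℝ) / n := by
    intro j hj
    set s := Finset.univ.filter fun i : Fin n => B (z i) = j with hs
    have hm0 : 0 < s.card := by
      obtain ⟨i0, -, hi0⟩ := Finset.mem_image.mp hj
      exact Finset.card_pos.mpr ⟨i0, Finset.mem_filter.mpr ⟨Finset.mem_univ _, hi0⟩⟩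
    have hm : (0:ℝ) < (s.card : ℝ) := by exact_mod_cast hm0
    have hcb : 0 ≤ ∑ i ∈ s, c i ∧ (∑ i ∈ s, c i) ≤ s.card := by
      constructor
      · exact Finset.sum_nonneg fun i _ => (hc i).1
      · calc (∑ i ∈ s, c i) ≤ ∑ i ∈ s, (1:ℝ) := Finset.sum_le_sum fun i _ => (hc i).2
          _ = s.card := by simp
    have hzb : 0 ≤ ∑ i ∈ s, z i ∧ (∑ i ∈ s, z i) ≤ s.card := by
      constructor
      · exact Finset.sum_nonneg fun i _ => (hz i).1
      · calc (∑ i ∈ s, z i) ≤ ∑ i ∈ s, (1:ℝ) := Finset.sum_le_sum fun i _ => (hz i).2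
          _ = s.card := by simp
    have habs : |(∑ i ∈ s, c i) / (s.card : ℝ) - (∑ i ∈ s, z i) / (s.card : ℝ)| ≤ 1 := by
      rw [abs_sub_le_iff]
      constructor
      · have := div_le_one_of_le₀ hcb.2 hm.le
        have := div_nonneg hzb.1 hm.le
        linarith
      · have := div_le_one_of_le₀ hzb.2 hm.le
        have := div_nonneg hcb.1 hm.le
        linarith
    calc ((s.card : ℝ)/n) * |(∑ i ∈ s, c i) / (s.card : ℝ) - (∑ i ∈ s, z i) / (s.card : ℝ)|
        ≤ ((s.card : ℝ)/n) * 1 := by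
          exact mul_le_mul_of_nonneg_left habs (div_nonneg hm.le hn0.le)
      _ = (s.card : ℝ)/n := by ring
  calc (∑ j ∈ Finset.image (fun i => B (z i)) Finset.univ,
      ((Finset.univ.filter fun i => B (z i) = j).card : ℝ) / n *
      |(∑ i ∈ Finset.univ.filter fun i => B (z i) = j, c i) /
          ((Finset.univ.filter fun i => B (z i) = j).card : ℝ) -
        (∑ i ∈ Finset.univ.filter fun i => B (z i) = j, z i) /
          ((Finset.univ.filter fun i => B (z i) = j).card : ℝ)|)
      ≤ ∑ j ∈ Finset.image (fun i => B (z i)) Finset.univ,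
        ((Finset.univ.filter fun i => B (z i) = j).card : ℝ) / n := Finset.sum_le_sum h1
    _ = 1 := by
        rw [← Finset.sum_div]
        rw [div_eq_one_iff_eq hn0.ne']
        have := Finset.card_eq_sum_card_fiberwise
          (f := fun i : Fin n => B (z i)) (s := Finset.univ)
          (t := Finset.image (fun i => B (z i)) Finset.univ)
          (fun x _ => Finset.mem_image_of_mem _ (Finset.mem_univ x))
        rw [Finset.card_univ, Fintype.card_fin] at this
        exact_mod_cast this.symm


/-- Proposition 1 of the paper (lower bound of the binned ECE for accuracy-preserving
calibration maps): if `k ≥ 2`, `n ≥ 1`, each confidence lies in `[1/k, 1]`, the empirical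
accuracy `π̂₀ = (∑ i, c i) / n` is `< 1`, every misclassified sample has confidence
strictly greater than `1/k`, and no misclassified sample shares its confidence with a
correctly classified one, then the supremum over all binning schemes of the empirical
binned ECE is strictly greater than `(1 - π̂₀) / k`. -/
theorem sup_binnedECE_gt_of_accuracy_preserving
    (k n : ℕ) (hk : 2 ≤ k) (hn : 1 ≤ n) (c z : Fin n → ℝ)
    (hc : ∀ i, c i = 0 ∨ c i = 1)
    (hz : ∀ i, z i ∈ Set.Icc (1 / (k : ℝ)) 1)
    (hacc : (∑ i, c i) / n < 1)
    (hmis : ∀ i, c i = 0 → 1 / (k : ℝ) < z i)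
    (hsep : ∀ i j, c i = 0 → c j = 1 → z i ≠ z j) :
    (1 - (∑ i, c i) / n) / k <
      sSup {e : ℝ | ∃ B : ℝ → ℕ, e = binnedECE c z B} := by
  classical
  have hn0 : (0:ℝ) < (n:ℝ) := by exact_mod_cast hn
  have hk0 : (0:ℝ) < (k:ℝ) := by
    have : 0 < k := lt_of_lt_of_le (by norm_num) hk
    exact_mod_cast this
  have hz0 : ∀ i, 0 ≤ z i := fun i =>
    le_trans (by positivity) (hz i).1
  -- the separating binning
  set B : ℝ → ℕ := fun x => if h : ∃ i : Fin n, z i = x then ((h.choose : Fin n) : ℕ) else 0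
    with hBdef
  have hBkey : ∀ i i' : Fin n, B (z i) = B (z i') → z i = z i' := by
    intro i i' hii
    have h1 : ∃ m : Fin n, z m = z i := ⟨i, rfl⟩
    have h2 : ∃ m : Fin n, z m = z i' := ⟨i', rfl⟩
    simp only [hBdef, dif_pos h1, dif_pos h2] at hii
    have heq : h1.choose = h2.choose := Fin.val_injective hii
    rw [← h1.choose_spec, ← h2.choose_spec, heq]
  -- bounded above
  have hbdd : BddAbove {e : ℝ | ∃ B : ℝ → ℕ, e = binnedECE c z B} := by
    refine ⟨1, ?_⟩
    rintro e ⟨B', rfl⟩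
    refine binnedECE_le_one c z B' (fun i => ?_) (fun i => ⟨hz0 i, (hz i).2⟩) hn
    rcases hc i with h | h <;> simp [h]
  have hmem : binnedECE c z B ∈ {e : ℝ | ∃ B : ℝ → ℕ, e = binnedECE c z B} := ⟨B, rfl⟩
  -- the indicator function
  set g : Fin n → ℝ := fun i => if c i = 0 then z i else 0 with hg
  -- lower bound binnedECE by (∑ g)/n
  have hlow : (∑ i, g i) / n ≤ binnedECE c z B := by
    unfold binnedECE
    have hfib : ∑ j ∈ Finset.image (fun i => B (z i)) Finset.univ,
        ∑ i ∈ Finset.univ.filter fun i => B (z i) = j, g i = ∑ i, g i :=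
      Finset.sum_fiberwise_of_maps_to (fun x _ => Finset.mem_image_of_mem _ (Finset.mem_univ x)) g
    rw [← hfib, Finset.sum_div]
    refine Finset.sum_le_sum ?_
    intro j hj
    set s := Finset.univ.filter fun i : Fin n => B (z i) = j with hs
    obtain ⟨i0, -, hi0⟩ := Finset.mem_image.mp hj
    have hi0s : i0 ∈ s := Finset.mem_filter.mpr ⟨Finset.mem_univ _, hi0⟩
    have hm : (0:ℝ) < (s.card : ℝ) := by
      exact_mod_cast Finset.card_pos.mpr ⟨i0, hi0s⟩
    by_cases hmisbin : ∃ i ∈ s, c i = 0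
    · obtain ⟨i1, hi1s, hi1⟩ := hmisbin
      -- all samples in s have z = z i1 and c = 0
      have hzall : ∀ i ∈ s, z i = z i1 := by
        intro i his
        apply hBkey
        rw [(Finset.mem_filter.mp his).2, (Finset.mem_filter.mp hi1s).2]
      have hcall : ∀ i ∈ s, c i = 0 := by
        intro i his
        rcases hc i with h | h
        · exact h
        · exact absurd (hzall i his).symm (hsep i1 i hi1 h)
      have hgall : ∀ i ∈ s, g i = z i := by
        intro i his; simp [hg, hcall i his]
      have hcz : (∑ i ∈ s, c i) = 0 := Finset.sum_eq_zero hcall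
      have hzsum : (∑ i ∈ s, z i) = s.card * z i1 := by
        rw [Finset.sum_congr rfl hzall]
        simp [mul_comm]
      have hgsum : (∑ i ∈ s, g i) = s.card * z i1 := by
        rw [Finset.sum_congr rfl hgall]; exact hzsum
      rw [hcz, hzsum, hgsum]
      rw [zero_div, mul_div_assoc, mul_div_cancel_left₀ _ hm.ne']
      rw [zero_sub, abs_neg, abs_of_nonneg (hz0 i1)]
      rw [div_mul_eq_mul_div, mul_comm]
      ring_nf
      exact le_refl _
    · have hgz : ∀ i ∈ s, g i = 0 := by
        intro i his
        have : c i ≠ 0 := fun h => hmisbin ⟨i, his, h⟩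
        simp [hg, this]
      rw [Finset.sum_eq_zero hgz, zero_div]
      exact mul_nonneg (div_nonneg (Nat.cast_nonneg _) hn0.le) (abs_nonneg _)
  -- the strict inequality
  have hmisex : ∃ i, c i = 0 := by
    by_contra h
    push_neg at h
    have : ∀ i, c i = 1 := fun i => (hc i).resolve_left (h i)
    rw [Finset.sum_congr rfl fun i _ => this i] at hacc
    simp at hacc
    rw [div_self hn0.ne'] at hacc
    exact lt_irrefl _ hacc
  have hstrict : (1 - (∑ i, c i) / n) / k < (∑ i, g i) / n := by
    have h1 : (1 - (∑ i, c i) / n) / k = (∑ i, (if c i = 0 then 1/(k:ℝ) else 0)) / n := by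
      have : (∑ i, (if c i = 0 then 1/(k:ℝ) else 0)) = (∑ i, (1 - c i)) / k := by
        rw [Finset.sum_div]
        refine Finset.sum_congr rfl fun i _ => ?_
        rcases hc i with h | h <;> simp [h]
      rw [this]
      have hsum1 : (∑ i : Fin n, (1 - c i)) = n - ∑ i, c i := by
        rw [Finset.sum_sub_distrib]
        simp
      rw [hsum1]
      have h2 : 1 - (∑ i, c i)/(n:ℝ) = ((n:ℝ) - ∑ i, c i)/n := by
        rw [sub_div, div_self hn0.ne']
      rw [h2, div_div, div_div, mul_comm]
    rw [h1, div_lt_div_iff_of_pos_right hn0]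
    refine Finset.sum_lt_sum (fun i _ => ?_) ?_
    · rcases hc i with h | h
      · simp only [hg, h, if_pos]
        exact (hmis i h).le
      · simp [hg, h]
    · obtain ⟨i, hi⟩ := hmisex
      exact ⟨i, Finset.mem_univ i, by simp only [hg, hi, if_pos]; exact hmis i hi⟩
  calc (1 - (∑ i, c i) / n) / k < (∑ i, g i) / n := hstrict
    _ ≤ binnedECE c z B := hlow
    _ ≤ sSup {e : ℝ | ∃ B : ℝ → ℕ, e = binnedECE c z B} := le_csSup hbdd hmem
end

section
/- Let (Ω, ℱ, μ) be a probability space, let Z : Ω → [0,1] and V : Ω → {0,1} be measurable random variables, and let β : [0,1] → [0,1] be any Borel-measurable (binning) function. Then E[ | μ[V − Z | σ(β ∘ Z)] | ] ≤ E[ | μ[V | σ(Z)] − Z | ], where μ[· | 𝒢] denotes conditional expectation with respect to the sub-σ-algebra 𝒢 and σ(f) is the σ-algebra generated by the random variable f. -/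
open MeasureTheory

/-- The second claim of Proposition 1 of the paper: for a confidence score
`Z : Ω → [0,1]`, a correctness indicator `V : Ω → {0,1}` and any Borel binning function
`β : [0,1] → [0,1]`, the binned calibration error `E[ |E[V - Z | σ(β ∘ Z)]| ]`
lower-bounds the true expected calibration error `E[ |E[V | σ(Z)] - Z| ]`. -/
theorem binned_calibration_error_le_ECE
    {Ω : Type*} [m0 : MeasurableSpace Ω] (μ : Measure Ω) [IsProbabilityMeasure μ]
    (Z V : Ω → ℝ) (hZ : Measurable Z) (hV : Measurable V)
    (hZ01 : ∀ ω, Z ω ∈ Set.Icc (0 : ℝ) 1)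
    (hV01 : ∀ ω, V ω = 0 ∨ V ω = 1)
    (β : ℝ → ℝ) (hβ : Measurable β) :
    ∫ ω, |(μ[V - Z | MeasurableSpace.comap (fun ω => β (Z ω)) Real.measurableSpace]) ω| ∂μ ≤
      ∫ ω, |(μ[V | MeasurableSpace.comap Z Real.measurableSpace]) ω - Z ω| ∂μ := by
  set mZ := MeasurableSpace.comap Z Real.measurableSpace with hmZ
  set mB := MeasurableSpace.comap (fun ω => β (Z ω)) Real.measurableSpace with hmB
  have hmZ_le : mZ ≤ m0 := hZ.comap_le
  have hmB_le_mZ : mB ≤ mZ := by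
    rw [hmB, hmZ]
    have : (fun ω => β (Z ω)) = β ∘ Z := rfl
    rw [this, ← MeasurableSpace.comap_comp]
    exact MeasurableSpace.comap_mono hβ.comap_le
  have hmB_le : mB ≤ m0 := hmB_le_mZ.trans hmZ_le
  -- integrability
  have hZint : Integrable Z μ := by
    refine (integrable_const (1 : ℝ)).mono' hZ.aestronglyMeasurable ?_
    filter_upwards with ω
    rcases hZ01 ω with ⟨h0, h1⟩
    simp [abs_le]; constructor <;> linarith
  have hVint : Integrable V μ := by
    refine (integrable_const (1 : ℝ)).mono' hV.aestronglyMeasurable ?_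
    filter_upwards with ω
    rcases hV01 ω with h | h <;> simp [h]
  have hVZint : Integrable (V - Z) μ := hVint.sub hZint
  -- Z is mZ-strongly measurable
  have hZmZ : StronglyMeasurable[mZ] Z :=
    (Measurable.of_comap_le le_rfl).stronglyMeasurable
  -- E[V - Z | mZ] = E[V | mZ] - Z
  have h1 : μ[V - Z | mZ] =ᵐ[μ] fun ω => (μ[V | mZ]) ω - Z ω := by
    have h := condExp_sub (m := mZ) (μ := μ) hVint hZint
    have hZeq : μ[Z | mZ] = Z := condExp_of_stronglyMeasurable hmZ_le hZmZ hZint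
    filter_upwards [h] with ω h using by simp [h, hZeq]
  -- tower property
  have h2 : μ[V - Z | mB] =ᵐ[μ] μ[μ[V - Z | mZ] | mB] :=
    (condExp_condExp_of_le hmB_le_mZ hmZ_le).symm
  have h3 : μ[μ[V - Z | mZ] | mB] =ᵐ[μ] μ[fun ω => (μ[V | mZ]) ω - Z ω | mB] :=
    condExp_congr_ae h1
  have heq : ∫ ω, |(μ[V - Z | mB]) ω| ∂μ
      = ∫ ω, |(μ[fun ω => (μ[V | mZ]) ω - Z ω | mB]) ω| ∂μ := by
    refine integral_congr_ae ?_
    filter_upwards [h2, h3] with ω ha hb using by rw [ha, hb]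
  rw [heq]
  exact integral_abs_condExp_le _
end

section
/- Let k ≥ 2 and consider n samples with correctness indicators c_i ∈ {0,1} and confidences z_i ∈ {1/k, 1}. Assume every sample with confidence z_i = 1 has c_i = 1, the set of samples with confidence 1/k is nonempty, and the fraction of samples with confidence 1/k whose correctness indicator equals 1 is exactly 1/k. Then for every binning scheme B, the empirical binned ECE equals 0; in particular the supremum over all binning schemes of the binned ECE equals 0. -/
open scoped Classical

/-- Proposition 2 of the paper (optimal calibration map): if `k ≥ 2`, confidences take
only the values `1/k` and `1`, every sample with confidence `1` is correctly classified,
some sample has confidence `1/k`, and exactly a fraction `1/k` of the samples with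
confidence `1/k` are correct, then every binning scheme has empirical binned ECE zero;
in particular the supremum over all binning schemes of the binned ECE is zero. -/
theorem binnedECE_eq_zero_of_optimal_map
    (k n : ℕ) (hk : 2 ≤ k) (c z : Fin n → ℝ)
    (hc : ∀ i, c i = 0 ∨ c i = 1)
    (hz : ∀ i, z i = 1 / (k : ℝ) ∨ z i = 1)
    (hcorrect : ∀ i, z i = 1 → c i = 1)
    (hne : ∃ i, z i = 1 / (k : ℝ))
    (hfrac : (∑ i ∈ Finset.univ.filter fun i => z i = 1 / (k : ℝ), c i) /
        ((Finset.univ.filter fun i : Fin n => z i = 1 / (k : ℝ)).card : ℝ) = 1 / (k : ℝ)) :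
    (∀ B : ℝ → ℕ, binnedECE c z B = 0) ∧
      sSup {e : ℝ | ∃ B : ℝ → ℕ, e = binnedECE c z B} = 0 := by
  have hk2 : (2:ℝ) ≤ (k:ℝ) := by exact_mod_cast hk
  have hkpos : (0:ℝ) < (k:ℝ) := by linarith
  set A : Finset (Fin n) := Finset.univ.filter fun i : Fin n => z i = 1 / (k : ℝ) with hA
  have hAne : A.Nonempty := by
    obtain ⟨i, hi⟩ := hne
    exact ⟨i, by simp [hA, hi]⟩
  have hAcard : (0:ℝ) < (A.card : ℝ) := by
    exact_mod_cast Finset.card_pos.mpr hAne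
  have hsumA : (∑ i ∈ A, c i) = (A.card : ℝ) * (1 / (k:ℝ)) := by
    have := hfrac
    field_simp at this ⊢
    linarith [this]
  have key : ∀ B : ℝ → ℕ, binnedECE c z B = 0 := by
    intro B
    unfold binnedECE
    apply Finset.sum_eq_zero
    intro j _
    set T : Finset (Fin n) := Finset.univ.filter fun i => B (z i) = j with hT
    have hsum : (∑ i ∈ T, c i) = ∑ i ∈ T, z i := by
      have hdiff : (∑ i ∈ T, (c i - z i)) = 0 := by
        rw [← Finset.sum_filter_add_sum_filter_not T (fun i => z i = 1)]
        have h1 : (∑ i ∈ T.filter (fun i => z i = 1), (c i - z i)) = 0 := by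
          apply Finset.sum_eq_zero
          intro i hi
          simp only [Finset.mem_filter] at hi
          rw [hcorrect i hi.2, hi.2]; ring
        have hk1 : (1:ℝ)/(k:ℝ) ≠ 1 := by
          intro h
          rw [div_eq_one_iff_eq (by linarith)] at h
          linarith
        have h2 : T.filter (fun i => ¬ z i = 1) = if B (1/(k:ℝ)) = j then A else ∅ := by
          have hknat : k ≠ 1 := by omega
          ext i
          by_cases hB : B (1/(k:ℝ)) = j
          · simp only [hB, if_pos, Finset.mem_filter, hT, hA, Finset.mem_univ, true_and]
            rcases hz i with h | h
            · rw [one_div] at hB; simp [h, hB, hknat]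
            · simp [h, hknat]
          · simp only [hB, if_neg, Finset.notMem_empty, iff_false, Finset.mem_filter, hT,
              Finset.mem_univ, true_and, not_and]
            rcases hz i with h | h
            · rw [one_div] at hB; simp [h, hB, hknat]
            · simp [h]
        rw [h1, h2]
        split
        · have : (∑ i ∈ A, (c i - z i)) = (∑ i ∈ A, c i) - ∑ i ∈ A, z i := by
            rw [Finset.sum_sub_distrib]
          rw [this, hsumA]
          have : (∑ i ∈ A, z i) = (A.card : ℝ) * (1/(k:ℝ)) := by
            rw [Finset.sum_congr rfl (fun i hi => by
              simp only [hA, Finset.mem_filter] at hi; exact hi.2)]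
            simp [mul_comm]
          rw [this]; ring
        · simp
      have := Finset.sum_sub_distrib (s := T) (f := c) (g := z)
      rw [this] at hdiff
      linarith
    rw [hsum]
    simp
  refine ⟨key, ?_⟩
  have hset : {e : ℝ | ∃ B : ℝ → ℕ, e = binnedECE c z B} = {0} := by
    ext e
    simp only [Set.mem_setOf_eq, Set.mem_singleton_iff]
    constructor
    · rintro ⟨B, rfl⟩; exact key B
    · rintro rfl; exact ⟨fun _ => 0, (key _).symm⟩
  rw [hset, csSup_singleton]
end

section
/- Let k ≥ 2 and consider n samples, each with an original correctness indicator c_i ∈ {0,1}, at least one of which is 0. A binary classifier marks each sample as covered or uncovered; covered samples are assigned confidence 1 and keep their post-calibration correctness equal to c_i, while uncovered samples are assigned confidence 1/k and we assume the fraction of uncovered samples whose post-calibration correctness indicator equals 1 is exactly 1/k. Let π̂₀ = (Σ_i c_i)/n be the original empirical accuracy and let R̂₁ be the fraction of samples with c_i = 0 that are covered (the empirical Type II error). Then for every binning scheme B, the empirical binned ECE computed from the assigned confidences and post-calibration correctness indicators equals R̂₁·(1 − π̂₀); in particular sup_B ECE_B = R̂₁·(1 − π̂₀). -/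
open scoped Classical

/-- Proposition 3 of the paper: `k ≥ 2`; `c` are the original correctness indicators
(at least one of which is `0`); a binary classifier covers the samples with `cov i = true`;
covered samples get confidence `1` and keep post-calibration correctness `c' i = c i`;
uncovered samples get confidence `1/k`, and exactly a fraction `1/k` of the uncovered
samples have post-calibration correctness `1`.  With `π̂₀ = (∑ i, c i) / n` the original
empirical accuracy and `R̂₁` the fraction of misclassified samples that are covered
(the empirical Type II error), every binning scheme has empirical binned
ECE (computed from assigned confidences and post-calibration correctness) equal to
`R̂₁ * (1 - π̂₀)`; in particular the supremum over all binning schemes equals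
`R̂₁ * (1 - π̂₀)`. -/
theorem binnedECE_eq_typeII_mul_error
    (k n : ℕ) (hk : 2 ≤ k) (c c' : Fin n → ℝ) (cov : Fin n → Bool)
    (hc : ∀ i, c i = 0 ∨ c i = 1)
    (hc' : ∀ i, c' i = 0 ∨ c' i = 1)
    (hmis : ∃ i, c i = 0)
    (hkeep : ∀ i, cov i = true → c' i = c i)
    (hfrac : (∑ i ∈ Finset.univ.filter fun i => cov i = false, c' i) /
        ((Finset.univ.filter fun i : Fin n => cov i = false).card : ℝ) = 1 / (k : ℝ))
    (z : Fin n → ℝ) (hz : z = fun i => if cov i then (1 : ℝ) else 1 / (k : ℝ))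
    (π₀ R₁ : ℝ)
    (hπ₀ : π₀ = (∑ i, c i) / n)
    (hR₁ : R₁ = ((Finset.univ.filter fun i : Fin n => c i = 0 ∧ cov i = true).card : ℝ) /
        ((Finset.univ.filter fun i : Fin n => c i = 0).card : ℝ)) :
    (∀ B : ℝ → ℕ, binnedECE c' z B = R₁ * (1 - π₀)) ∧
      sSup {e : ℝ | ∃ B : ℝ → ℕ, e = binnedECE c' z B} = R₁ * (1 - π₀) := by
  classical
  subst hz hπ₀ hR₁
  obtain ⟨i0, hi0⟩ := hmis
  have hn : 0 < n := i0.pos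
  have hnR : (0:ℝ) < n := by exact_mod_cast hn
  haveI : Nonempty (Fin n) := ⟨i0⟩
  have hkR : (0:ℝ) < k := by
    have : (2:ℝ) ≤ k := by exact_mod_cast hk
    linarith
  set S1 := Finset.univ.filter (fun i : Fin n => cov i = true) with hS1def
  set S0 := Finset.univ.filter (fun i : Fin n => cov i = false) with hS0def
  set m := (Finset.univ.filter (fun i : Fin n => c i = 0 ∧ cov i = true)).card with hmdef
  -- S0 is nonempty
  have hS0card : (S0.card : ℝ) ≠ 0 := by
    intro h
    have h0 : S0.card = 0 := by exact_mod_cast h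
    have hS0e : S0 = ∅ := Finset.card_eq_zero.mp h0
    rw [hS0e] at hfrac
    simp at hfrac
    rw [hfrac] at hkR
    simp at hkR
  -- sums of c' on the two parts
  have hsum0 : ∑ i ∈ S0, c' i = (S0.card : ℝ) / k := by
    rw [div_eq_iff hS0card] at hfrac
    rw [hfrac]
    ring
  have hset1 : S1.filter (fun i => c i = 0)
      = Finset.univ.filter (fun i : Fin n => c i = 0 ∧ cov i = true) := by
    ext i
    simp [hS1def, Finset.mem_filter, and_comm]
  have hsum1 : ∑ i ∈ S1, c' i = (S1.card : ℝ) - m := by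
    have h1 : ∑ i ∈ S1, c' i = ∑ i ∈ S1, c i := by
      refine Finset.sum_congr rfl fun i hi => ?_
      exact hkeep i (by simpa [hS1def] using hi)
    have h2 : ∀ i ∈ S1, c i = 1 - (if c i = 0 then (1:ℝ) else 0) := by
      intro i _
      rcases hc i with h | h <;> simp [h]
    rw [h1, Finset.sum_congr rfl h2, Finset.sum_sub_distrib, Finset.sum_const,
      Finset.sum_boole, hset1]
    simp [hmdef]
  have hm_le : (m:ℝ) ≤ (S1.card : ℝ) := by
    have : m ≤ S1.card := by
      rw [hmdef, ← hset1]
      exact Finset.card_filter_le _ _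
    exact_mod_cast this
  have hm_nonneg : (0:ℝ) ≤ (m:ℝ) := Nat.cast_nonneg m
  -- sums of z on the two parts
  have hsz1 : ∑ i ∈ S1, (if cov i then (1:ℝ) else 1/(k:ℝ)) = (S1.card : ℝ) := by
    have h1 : ∀ i ∈ S1, (if cov i then (1:ℝ) else 1/(k:ℝ)) = 1 := by
      intro i hi
      have : cov i = true := by simpa [hS1def] using hi
      simp [this]
    rw [Finset.sum_congr rfl h1, Finset.sum_const, nsmul_eq_mul, mul_one]
  have hsz0 : ∑ i ∈ S0, (if cov i then (1:ℝ) else 1/(k:ℝ)) = (S0.card : ℝ) / k := by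
    have h1 : ∀ i ∈ S0, (if cov i then (1:ℝ) else 1/(k:ℝ)) = 1/(k:ℝ) := by
      intro i hi
      have : cov i = false := by simpa [hS0def] using hi
      simp [this]
    rw [Finset.sum_congr rfl h1, Finset.sum_const, nsmul_eq_mul]
    ring
  have hSnot : Finset.univ.filter (fun i : Fin n => ¬ cov i = true) = S0 := by
    ext i
    simp [hS0def]
  -- the key computation
  have key : ∀ B : ℝ → ℕ,
      binnedECE c' (fun i => if cov i then (1:ℝ) else 1/(k:ℝ)) B = (m:ℝ) / n := by
    intro B
    rw [binnedECE]
    have hB : ∀ i : Fin n, B (if cov i then (1:ℝ) else 1/(k:ℝ))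
        = if cov i then B 1 else B (1/(k:ℝ)) := by
      intro i
      by_cases h : cov i <;> simp [h]
    simp only [hB]
    by_cases hab : B 1 = B (1/(k:ℝ))
    · -- single bin containing everything
      simp only [hab, ite_self]
      have himg : Finset.image (fun _ : Fin n => B (1/(k:ℝ))) Finset.univ
          = {B (1/(k:ℝ))} :=
        Finset.image_const Finset.univ_nonempty _
      rw [himg, Finset.sum_singleton]
      have hfil : Finset.univ.filter (fun _ : Fin n => B (1/(k:ℝ)) = B (1/(k:ℝ)))
          = Finset.univ := by simp
      rw [hfil]
      have hCc' : ∑ i ∈ Finset.univ, c' i = ((S1.card:ℝ) - m) + (S0.card:ℝ)/k := by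
        rw [← Finset.sum_filter_add_sum_filter_not Finset.univ (fun i => cov i = true) c',
          hSnot, hsum1, hsum0]
      have hCz : ∑ i ∈ Finset.univ, (if cov i then (1:ℝ) else 1/(k:ℝ))
          = (S1.card:ℝ) + (S0.card:ℝ)/k := by
        rw [← Finset.sum_filter_add_sum_filter_not Finset.univ (fun i => cov i = true)
          (fun i => if cov i then (1:ℝ) else 1/(k:ℝ)), hSnot, hsz1, hsz0]
      rw [hCc', hCz, Finset.card_univ, Fintype.card_fin]
      have hdiff : (((S1.card:ℝ) - m) + (S0.card:ℝ)/k)/n - ((S1.card:ℝ) + (S0.card:ℝ)/k)/n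
          = -((m:ℝ)/n) := by ring
      rw [hdiff, abs_neg, abs_of_nonneg (by positivity), div_self hnR.ne', one_mul]
    · -- two distinct bins
      have hab1 : B 1 ≠ B ((k:ℝ))⁻¹ := by
        rw [← one_div]; exact hab
      have hab2 : B ((k:ℝ))⁻¹ ≠ B 1 := by
        rw [← one_div]; exact fun h' => hab h'.symm
      have hfa : Finset.univ.filter
          (fun i : Fin n => (if cov i then B 1 else B (1/(k:ℝ))) = B 1) = S1 := by
        ext i
        by_cases h : cov i <;> simp [h, hS1def, hab1, hab2]
      have hfb : Finset.univ.filter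
          (fun i : Fin n => (if cov i then B 1 else B (1/(k:ℝ))) = B (1/(k:ℝ))) = S0 := by
        ext i
        by_cases h : cov i <;> simp [h, hS0def, hab1, hab2]
      have htermb : ((S0.card : ℝ)) / n *
          |(∑ i ∈ S0, c' i) / (S0.card : ℝ) -
            (∑ i ∈ S0, (if cov i then (1:ℝ) else 1/(k:ℝ))) / (S0.card : ℝ)| = 0 := by
        rw [hsum0, hsz0]
        simp
      by_cases hS1e : S1 = ∅
      · -- everything uncovered
        have hcovf : ∀ i, cov i = false := by
          intro i
          by_contra h
          have hct : cov i = true := by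
            cases hcv : cov i
            · exact absurd hcv h
            · rfl
          have : i ∈ S1 := by simp [hS1def, hct]
          rw [hS1e] at this
          simp at this
        have himg : Finset.image (fun i : Fin n => if cov i then B 1 else B (1/(k:ℝ)))
            Finset.univ = {B (1/(k:ℝ))} := by
          have : (fun i : Fin n => if cov i then B 1 else B (1/(k:ℝ)))
              = fun _ => B (1/(k:ℝ)) := by
            funext i; simp [hcovf i]
          rw [this]
          exact Finset.image_const Finset.univ_nonempty _
        rw [himg, Finset.sum_singleton, hfb]
        have hm0 : m = 0 := by
          rw [hmdef, Finset.card_eq_zero]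
          ext i
          simp [hcovf i]
        rw [htermb, hm0]
        simp
      · -- both bins occur
        obtain ⟨i1, hi1⟩ := Finset.nonempty_of_ne_empty hS1e
        have hS1card : (S1.card : ℝ) ≠ 0 := by
          have : 0 < S1.card := Finset.card_pos.mpr ⟨i1, hi1⟩
          positivity
        have himg : Finset.image (fun i : Fin n => if cov i then B 1 else B (1/(k:ℝ)))
            Finset.univ = {B 1, B (1/(k:ℝ))} := by
          apply Finset.Subset.antisymm
          · intro j hj
            simp only [Finset.mem_image, Finset.mem_univ, true_and] at hj
            obtain ⟨i, hij⟩ := hj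
            by_cases h : cov i <;> simp [h] at hij <;> simp [← hij]
          · intro j hj
            simp only [Finset.mem_insert, Finset.mem_singleton] at hj
            simp only [Finset.mem_image, Finset.mem_univ, true_and]
            rcases hj with rfl | rfl
            · have hct : cov i1 = true := by simpa [hS1def] using hi1
              exact ⟨i1, by simp [hct]⟩
            · have : S0.Nonempty := by
                rw [Finset.nonempty_iff_ne_empty]
                intro h
                exact hS0card (by rw [h]; simp)
              obtain ⟨i2, hi2⟩ := this
              have hcf : cov i2 = false := by simpa [hS0def] using hi2
              exact ⟨i2, by simp [hcf]⟩
        rw [himg, Finset.sum_insert (by simpa using hab), Finset.sum_singleton, hfa, hfb,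
          htermb, add_zero, hsum1, hsz1]
        have hdiff : ((S1.card:ℝ) - m) / (S1.card:ℝ) - (S1.card:ℝ)/(S1.card:ℝ)
            = -((m:ℝ)/(S1.card:ℝ)) := by
          field_simp
          ring
        rw [hdiff, abs_neg, abs_of_nonneg (by positivity)]
        field_simp
  -- the target value
  have hsum_c : ∑ i, c i = (n:ℝ) - ((Finset.univ.filter fun i : Fin n => c i = 0).card : ℝ) := by
    have h2 : ∀ i ∈ Finset.univ, c i = 1 - (if c i = 0 then (1:ℝ) else 0) := by
      intro i _
      rcases hc i with h | h <;> simp [h]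
    rw [Finset.sum_congr rfl h2, Finset.sum_sub_distrib, Finset.sum_const, Finset.sum_boole]
    simp
  have hm0pos : (0:ℝ) < ((Finset.univ.filter fun i : Fin n => c i = 0).card : ℝ) := by
    have : i0 ∈ Finset.univ.filter fun i : Fin n => c i = 0 := by simp [hi0]
    have := Finset.card_pos.mpr ⟨i0, this⟩
    exact_mod_cast this
  have hval : (m:ℝ)/n =
      ((Finset.univ.filter fun i : Fin n => c i = 0 ∧ cov i = true).card : ℝ) /
        ((Finset.univ.filter fun i : Fin n => c i = 0).card : ℝ) * (1 - (∑ i, c i) / n) := by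
    rw [hsum_c, hmdef]
    field_simp
    ring
  constructor
  · intro B
    rw [key B, hval]
  · have hset : {e : ℝ | ∃ B : ℝ → ℕ,
        e = binnedECE c' (fun i => if cov i then (1:ℝ) else 1/(k:ℝ)) B} = {(m:ℝ)/n} := by
      ext e
      simp only [Set.mem_setOf_eq, Set.mem_singleton_iff]
      constructor
      · rintro ⟨B, rfl⟩
        exact key B
      · rintro rfl
        exact ⟨fun _ => 0, (key _).symm⟩
    rw [hset, csSup_singleton, hval]
end

section
/- Let X₁, …, X_{n₁} be i.i.d. real random variables whose common cumulative distribution function F is continuous (equivalently, their common law is atomless). Fix α ∈ (0,1) and set v = ⌈(n₁ + 1)(1 − α)⌉, and assume v ≤ n₁. Let X_(v) denote the v-th order statistic (v-th smallest). Then P(1 − F(X_(v)) > α) = Σ_{j=v}^{n₁} C(n₁,j)·(1−α)^j·α^{n₁−j}. -/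
/-!
With `s = {x | F x < 1 - α}`, a lower set, the event `1 - F(X_(v)) > α` says `X_(v) ∈ s`, and
since a sorted list lists the members of a lower set first, this happens exactly when at least
`v` of the `X_i` lie in `s`. Continuity of `F` gives `P(X_i ∈ s) = 1 - α` (the probability
integral transform), and independence makes the number of `X_i` in `s` binomial `(n₁, 1 - α)`.
-/

open MeasureTheory ProbabilityTheory

/-- The `v`-th order statistic (the `v`-th smallest value, `1 ≤ v ≤ n`) of the values
`x 0, …, x (n-1)`. -/
noncomputable def orderStat {n : ℕ} (x : Fin n → ℝ) (v : ℕ) : ℝ :=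
  ((List.ofFn x).insertionSort (· ≤ ·)).getD (v - 1) 0

open Finset

theorem List.Pairwise.getElem_mem_iff_lt_countP {α : Type*} [Preorder α] {L : List α}
    (hL : L.Pairwise (· ≤ ·)) {s : Set α} [DecidablePred (· ∈ s)] (hs : IsLowerSet s)
    {k : ℕ} (hk : k < L.length) : L[k] ∈ s ↔ k < L.countP (· ∈ s) := by
  induction L generalizing k with
  | nil => simp at hk
  | cons a l ih =>
    obtain ⟨hal, hl⟩ := List.pairwise_cons.1 hL
    by_cases ha : a ∈ s
    · cases k with
      | zero => simp [ha]
      | succ k => simp [ha, ih hl (Nat.lt_of_succ_lt_succ hk)]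
    · have hnot : ∀ b ∈ a :: l, b ∉ s := by
        rintro b hb hbs
        exact ha (hs (List.forall_mem_cons.2 ⟨le_rfl, hal⟩ b hb) hbs)
      rw [List.countP_eq_zero.2 fun b hb => by simpa using hnot b hb]
      simp [hnot _ (List.getElem_mem hk)]

theorem List.countP_ofFn {α : Type*} {n : ℕ} (x : Fin n → α) (p : α → Prop)
    [DecidablePred p] :
    (List.ofFn x).countP (p ·) = #{i | p (x i)} := by
  rw [← Multiset.coe_countP, ← Fin.univ_val_map, Multiset.countP_map]
  rfl

theorem orderStat_mem_iff_le_card {n : ℕ} (x : Fin n → ℝ) {s : Set ℝ}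
    [DecidablePred (· ∈ s)] (hs : IsLowerSet s) {v : ℕ} (hv : 1 ≤ v) (hvn : v ≤ n) :
    orderStat x v ∈ s ↔ v ≤ #{i | x i ∈ s} := by
  set L := (List.ofFn x).insertionSort (· ≤ ·)
  have hlen : L.length = n := by simp [L]
  have hk : v - 1 < L.length := by omega
  rw [orderStat, List.getD_eq_getElem _ _ hk,
    (List.pairwise_insertionSort _ _).getElem_mem_iff_lt_countP hs hk,
    (List.perm_insertionSort _ _).countP_eq, List.countP_ofFn]
  omega

section Binomial

variable {ι α : Type*} [Fintype ι] {s : Set α} [DecidablePred (· ∈ s)]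

theorem setOf_filter_mem_eq_pi [DecidableEq ι] (S : Finset ι) :
    {x : ι → α | ({i | x i ∈ s} : Finset ι) = S} =
      Set.univ.pi fun i => if i ∈ S then s else sᶜ := by
  ext x
  simp only [Set.mem_ofPred_eq, Set.mem_univ_pi, Finset.ext_iff, mem_filter, mem_univ, true_and]
  exact forall_congr' fun i => by split_ifs with hi <;> simp [hi]

variable [MeasurableSpace α]

theorem measurable_card_filter_mem (hs : MeasurableSet s) :
    Measurable fun x : ι → α => #{i | x i ∈ s} := by
  simp_rw [card_filter]
  exact measurable_sum _ fun i _ =>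
    Measurable.ite ((measurable_pi_apply i) hs) measurable_const measurable_const

theorem measurableSet_setOf_filter_mem_eq [DecidableEq ι] (hs : MeasurableSet s) (S : Finset ι) :
    MeasurableSet {x : ι → α | ({i | x i ∈ s} : Finset ι) = S} := by
  rw [setOf_filter_mem_eq_pi]
  exact .univ_pi fun i => by split_ifs <;> simp [hs, hs.compl]

variable (ν : Measure α) [IsProbabilityMeasure ν]

theorem measureReal_pi_setOf_filter_mem_eq [DecidableEq ι] (hs : MeasurableSet s) (S : Finset ι) :
    (Measure.pi fun _ : ι => ν).real {x | ({i | x i ∈ s} : Finset ι) = S} =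
      ν.real s ^ #S * (1 - ν.real s) ^ (Fintype.card ι - #S) := by
  rw [setOf_filter_mem_eq_pi, measureReal_def, Measure.pi_pi, ENNReal.toReal_prod]
  simp only [apply_ite ν, apply_ite ENNReal.toReal, ← measureReal_def, measureReal_compl hs,
    probReal_univ]
  rw [prod_ite, prod_const, prod_const, filter_mem_eq_inter, univ_inter, filter_not,
    filter_mem_eq_inter, univ_inter, ← compl_eq_univ_sdiff, card_compl]

theorem measureReal_pi_setOf_card_filter_mem_eq (hs : MeasurableSet s) (j : ℕ) :
    (Measure.pi fun _ : ι => ν).real {x | #{i | x i ∈ s} = j} =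
      (Fintype.card ι).choose j * ν.real s ^ j * (1 - ν.real s) ^ (Fintype.card ι - j) := by
  classical
  have hfibers : {x : ι → α | #{i | x i ∈ s} = j} =
      (fun x => ({i | x i ∈ s} : Finset ι)) ⁻¹' ↑(powersetCard j (univ : Finset ι)) := by
    ext x; simp
  rw [hfibers, ← sum_measureReal_preimage_singleton _ fun S _ =>
    measurableSet_setOf_filter_mem_eq hs S]
  calc ∑ S ∈ powersetCard j univ, _
      = ∑ S ∈ powersetCard j (univ : Finset ι),
          ν.real s ^ j * (1 - ν.real s) ^ (Fintype.card ι - j) :=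
        sum_congr rfl fun S hS => (measureReal_pi_setOf_filter_mem_eq ν hs S).trans
          (by rw [mem_powersetCard_univ.1 hS])
    _ = _ := by rw [sum_const, card_powersetCard, card_univ, nsmul_eq_mul, mul_assoc]

theorem measureReal_pi_setOf_le_card_filter_mem (hs : MeasurableSet s) (v : ℕ) :
    (Measure.pi fun _ : ι => ν).real {x | v ≤ #{i | x i ∈ s}} =
      ∑ j ∈ Icc v (Fintype.card ι),
        (Fintype.card ι).choose j * ν.real s ^ j * (1 - ν.real s) ^ (Fintype.card ι - j) := by
  have hfibers : {x : ι → α | v ≤ #{i | x i ∈ s}} =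
      (fun x => #{i | x i ∈ s}) ⁻¹' ↑(Icc v (Fintype.card ι)) := by
    ext x; simpa using fun _ => card_le_univ _
  rw [hfibers, ← sum_measureReal_preimage_singleton _ fun j _ =>
    measurable_card_filter_mem hs (measurableSet_singleton j)]
  exact sum_congr rfl fun j _ => measureReal_pi_setOf_card_filter_mem_eq ν hs j

end Binomial

theorem exists_cdf_eq {ν : Measure ℝ} [IsProbabilityMeasure ν] (hF : Continuous (cdf ν))
    {c : ℝ} (hc : c ∈ Set.Ioo 0 1) : ∃ a, cdf ν a = c :=
  mem_range_of_exists_le_of_exists_ge hF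
    ((tendsto_cdf_atBot ν).eventually_le_const hc.1).exists
    ((tendsto_cdf_atTop ν).eventually_const_le hc.2).exists

theorem measureReal_setOf_cdf_lt {ν : Measure ℝ} [IsProbabilityMeasure ν]
    (hF : Continuous (cdf ν)) {t : ℝ} (ht : t ∈ Set.Ioo 0 1) :
    ν.real {x | cdf ν x < t} = t := by
  refine le_antisymm ?_ (le_of_forall_lt_imp_le_of_dense fun c hct => ?_)
  · obtain ⟨a, ha⟩ := exists_cdf_eq hF ht
    calc ν.real {x | cdf ν x < t} ≤ ν.real (Set.Iic a) :=
          measureReal_mono fun x hx => ((monotone_cdf ν).reflect_lt (ha ▸ hx)).le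
      _ = t := by rw [← cdf_eq_real, ha]
  rcases le_or_gt c 0 with hc | hc
  · exact hc.trans measureReal_nonneg
  obtain ⟨b, hb⟩ := exists_cdf_eq hF ⟨hc, hct.trans ht.2⟩
  calc c = ν.real (Set.Iic b) := by rw [← cdf_eq_real, hb]
    _ ≤ ν.real {x | cdf ν x < t} :=
        measureReal_mono fun x hx => (monotone_cdf ν hx).trans_lt (hb ▸ hct)

/-- Equation (5) of Proposition 4 of the paper (miscoverage rate control): if
`X₁, …, X_{n₁}` are i.i.d. with common law `ν` whose cumulative distribution function
`F` is continuous (equivalently `ν` is atomless), `α ∈ (0,1)`,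
`v = ⌈(n₁ + 1)(1 - α)⌉ ≤ n₁`, and `X_(v)` is the `v`-th order statistic, then
`P(1 - F(X_(v)) > α) = ∑_{j=v}^{n₁} C(n₁,j) (1-α)^j α^(n₁-j)`. -/
theorem miscoverage_rate_control
    {Ω : Type*} [MeasurableSpace Ω] (μ : Measure Ω) [IsProbabilityMeasure μ]
    (n₁ : ℕ) (X : Fin n₁ → Ω → ℝ) (hmeas : ∀ i, Measurable (X i))
    (hindep : iIndepFun X μ)
    (ν : Measure ℝ) [IsProbabilityMeasure ν]
    (hid : ∀ i, Measure.map (X i) μ = ν)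
    (F : ℝ → ℝ) (hF : F = fun t => (ν (Set.Iic t)).toReal)
    (hFcont : Continuous F)
    (α : ℝ) (hα : α ∈ Set.Ioo (0 : ℝ) 1)
    (v : ℕ) (hv : v = ⌈((n₁ : ℝ) + 1) * (1 - α)⌉₊) (hvn : v ≤ n₁) :
    μ {ω | α < 1 - F (orderStat (fun i => X i ω) v)} =
      ENNReal.ofReal
        (∑ j ∈ Finset.Icc v n₁, (n₁.choose j : ℝ) * (1 - α) ^ j * α ^ (n₁ - j)) := by
  obtain rfl : F = cdf ν := by ext t; rw [hF, cdf_eq_real, measureReal_def]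
  classical
  set s := {x | cdf ν x < 1 - α}
  have hs : MeasurableSet s := measurableSet_lt hFcont.measurable measurable_const
  have hslower : IsLowerSet s := (isLowerSet_Iio _).preimage (monotone_cdf ν)
  have hv1 : 1 ≤ v := hv ▸ Nat.one_le_iff_ne_zero.2
    (Nat.ceil_pos.2 (mul_pos (by positivity) (sub_pos.2 hα.2))).ne'
  have hevent : {ω | α < 1 - cdf ν (orderStat (fun i => X i ω) v)} =
      (fun ω i => X i ω) ⁻¹' {x | v ≤ #{i | x i ∈ s}} := by
    ext ω
    rw [Set.mem_preimage, Set.mem_ofPred_eq, Set.mem_ofPred_eq, lt_sub_comm,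
      ← orderStat_mem_iff_le_card _ hslower hv1 hvn]
    rfl
  have hlaw : μ.map (fun ω i => X i ω) = Measure.pi fun _ => ν := by
    rw [(iIndepFun_iff_map_fun_eq_pi_map fun i => (hmeas i).aemeasurable).1 hindep]
    simp_rw [hid]
  have hcount : MeasurableSet {x : Fin n₁ → ℝ | v ≤ #{i | x i ∈ s}} :=
    measurable_card_filter_mem hs measurableSet_Ici
  rw [hevent, ← Measure.map_apply (measurable_pi_lambda _ hmeas) hcount, hlaw,
    ← ofReal_measureReal, measureReal_pi_setOf_le_card_filter_mem ν hs v,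
    measureReal_setOf_cdf_lt hFcont ⟨sub_pos.2 hα.2, sub_lt_self 1 hα.1⟩, Fintype.card_fin,
    sub_sub_cancel]
end

section
/- Let (Ω, ℱ, μ) be a probability space, h : Ω → ℝ a measurable function, A ∈ ℱ a measurable event, and t : ℝ → [0,1] a monotonically nondecreasing Borel-measurable function such that μ[1_A | σ(h)] = t ∘ h holds μ-almost everywhere. For every s ∈ ℝ with μ(h < s) > 0, define the coverage accuracy l(s) = 1 − μ(A ∩ {h < s})/μ(h < s). Then l(s) = 1 − E[t(h) · 1_{h < s}]/μ(h < s) for every such s, and l is monotonically nonincreasing on {s ∈ ℝ : μ(h < s) > 0}. -/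
open MeasureTheory

/-- Proposition 7 of the paper (existence of a monotonically decreasing coverage
accuracy transformation): let `h : Ω → ℝ` be a measurable ranking model, `A` a
measurable event (the event of misclassification), and `t : ℝ → [0,1]` a monotonically
nondecreasing Borel function such that `μ[1_A | σ(h)] = t ∘ h` a.e. (`t ∘ h` is a
calibrated binary CPE model).  For every threshold `s` with `μ(h < s) > 0`, the coverage
accuracy `l(s) = 1 - μ(A ∩ {h < s}) / μ(h < s)` satisfies
`l(s) = 1 - E[t(h) · 1_{h < s}] / μ(h < s)`, and `l` is monotonically nonincreasing on
the set of thresholds `s` with `μ(h < s) > 0`. -/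
theorem coverage_accuracy_transformation
    {Ω : Type*} [m0 : MeasurableSpace Ω] (μ : Measure Ω) [IsProbabilityMeasure μ]
    (h : Ω → ℝ) (hh : Measurable h) (A : Set Ω) (hA : MeasurableSet A)
    (t : ℝ → ℝ) (hmono : Monotone t) (ht : Measurable t)
    (ht01 : ∀ x, t x ∈ Set.Icc (0 : ℝ) 1)
    (hcal : (μ[A.indicator (fun _ => (1 : ℝ)) |
        MeasurableSpace.comap h Real.measurableSpace]) =ᵐ[μ] fun ω => t (h ω)) :
    (∀ s : ℝ, 0 < μ {ω | h ω < s} →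
        1 - (μ (A ∩ {ω | h ω < s})).toReal / (μ {ω | h ω < s}).toReal =
          1 - (∫ ω in {ω | h ω < s}, t (h ω) ∂μ) / (μ {ω | h ω < s}).toReal) ∧
      (∀ s s' : ℝ, 0 < μ {ω | h ω < s} → 0 < μ {ω | h ω < s'} → s ≤ s' →
        1 - (μ (A ∩ {ω | h ω < s'})).toReal / (μ {ω | h ω < s'}).toReal ≤
          1 - (μ (A ∩ {ω | h ω < s})).toReal / (μ {ω | h ω < s}).toReal) := by
  have hle : MeasurableSpace.comap h Real.measurableSpace ≤ m0 := hh.comap_le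
  haveI : SigmaFinite (μ.trim hle) := by infer_instance
  have hint_t : Integrable (fun ω => t (h ω)) μ := by
    apply Integrable.mono' (integrable_const (1:ℝ)) ((ht.comp hh).aestronglyMeasurable)
    filter_upwards with ω
    simp only [Function.comp_apply, Real.norm_eq_abs, abs_of_nonneg (ht01 (h ω)).1]
    exact (ht01 _).2
  have hint_ind : Integrable (A.indicator (fun _ => (1:ℝ))) μ :=
    (integrable_const 1).indicator hA
  have key : ∀ s : ℝ, (μ (A ∩ {ω | h ω < s})).toReal = ∫ ω in {ω | h ω < s}, t (h ω) ∂μ := by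
    intro s
    have hS : MeasurableSet[MeasurableSpace.comap h Real.measurableSpace] {ω | h ω < s} :=
      ⟨Set.Iio s, measurableSet_Iio, rfl⟩
    have hS0 : MeasurableSet {ω | h ω < s} := hh measurableSet_Iio
    have h1 : ∫ ω in {ω | h ω < s}, t (h ω) ∂μ
        = ∫ ω in {ω | h ω < s},
            (μ[A.indicator (fun _ => (1:ℝ)) | MeasurableSpace.comap h Real.measurableSpace]) ω ∂μ :=
      setIntegral_congr_ae hS0 (hcal.symm.mono fun ω hω _ => hω)
    rw [h1, setIntegral_condExp hle hint_ind hS, setIntegral_indicator hA, setIntegral_const,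
      smul_eq_mul, mul_one, Set.inter_comm, measureReal_def]
  have keymono : ∀ s s' : ℝ, 0 < μ {ω | h ω < s} → 0 < μ {ω | h ω < s'} → s ≤ s' →
      (μ (A ∩ {ω | h ω < s})).toReal / (μ {ω | h ω < s}).toReal ≤
        (μ (A ∩ {ω | h ω < s'})).toReal / (μ {ω | h ω < s'}).toReal := by
    intro s s' hs hs' hss
    rw [key s, key s']
    set B := {ω | h ω < s} with hB
    set C := {ω | h ω < s'} with hC
    have hBC : B ⊆ C := fun ω hω => lt_of_lt_of_le hω hss
    have hBm : MeasurableSet B := hh measurableSet_Iio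
    have hCm : MeasurableSet C := hh measurableSet_Iio
    have hDm : MeasurableSet (C \ B) := hCm.diff hBm
    have hp : (0:ℝ) < (μ B).toReal := ENNReal.toReal_pos hs.ne' (measure_ne_top μ B)
    have hq : (0:ℝ) < (μ C).toReal := ENNReal.toReal_pos hs'.ne' (measure_ne_top μ C)
    have hpq : (μ B).toReal ≤ (μ C).toReal :=
      ENNReal.toReal_mono (measure_ne_top μ C) (measure_mono hBC)
    have hsplit : ∫ ω in C, t (h ω) ∂μ = (∫ ω in B, t (h ω) ∂μ) + ∫ ω in C \ B, t (h ω) ∂μ := by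
      rw [← setIntegral_union (Set.disjoint_sdiff_right) hDm hint_t.integrableOn hint_t.integrableOn,
        Set.union_diff_cancel hBC]
    -- upper bound on B
    have hub : ∫ ω in B, t (h ω) ∂μ ≤ t s * (μ B).toReal := by
      calc ∫ ω in B, t (h ω) ∂μ ≤ ∫ _ω in B, t s ∂μ := by
            apply setIntegral_mono_on hint_t.integrableOn (integrableOn_const (measure_ne_top μ B)) hBm
            intro ω hω; exact hmono (le_of_lt hω)
        _ = t s * (μ B).toReal := by rw [setIntegral_const, smul_eq_mul, mul_comm, measureReal_def]
    have hlb : t s * (μ (C \ B)).toReal ≤ ∫ ω in C \ B, t (h ω) ∂μ := by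
      calc t s * (μ (C \ B)).toReal = ∫ _ω in C \ B, t s ∂μ := by
            rw [setIntegral_const, smul_eq_mul, mul_comm, measureReal_def]
        _ ≤ ∫ ω in C \ B, t (h ω) ∂μ := by
            apply setIntegral_mono_on (integrableOn_const (measure_ne_top μ _)) hint_t.integrableOn hDm
            intro ω hω; exact hmono (not_lt.1 hω.2)
    have hnnB : 0 ≤ ∫ ω in B, t (h ω) ∂μ :=
      setIntegral_nonneg hBm fun ω _ => (ht01 _).1
    have hmD : (μ (C \ B)).toReal = (μ C).toReal - (μ B).toReal := by
      rw [measure_diff hBC hBm.nullMeasurableSet (measure_ne_top μ B),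
        ENNReal.toReal_sub_of_le (measure_mono hBC) (measure_ne_top μ C)]
    rw [div_le_div_iff₀ hp hq, hsplit]
    rw [hmD] at hlb
    nlinarith [mul_le_mul_of_nonneg_right hub (sub_nonneg.2 hpq),
      mul_le_mul_of_nonneg_left hlb hp.le]
  refine ⟨fun s _ => by rw [key s], fun s s' hs hs' hss => ?_⟩
  have := keymono s s' hs hs' hss
  linarith
end
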